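/- Let P₁ ∈ ℝ^{m×m} and P₂ ∈ ℝ^{n×n} be positive semidefinite, A ∈ ℝ^{m×m}, B ∈ ℝ^{m×n}, C ∈ ℝ^{n×m}, D ∈ ℝ^{n×n}, and τ > 0. Then the block matrix inequality [A B; C D]ᵀ · diag(P₁,P₂) · [A B; C D] ⪯ diag((1+τ)(AᵀP₁A + CᵀP₂C), (1+1/τ)(BᵀP₁B + DᵀP₂D)) holds in the Loewner order. -/

import Mathlib

open Matrix

noncomputable def enorm {ι : Type*} [Fintype ι] (v : ι → ℝ) : ℝ :=
  ‖(WithLp.equiv 2 (ι → ℝ)).symm v‖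

noncomputable def sn {m n : Type*} [Fintype m] [Fintype n] [DecidableEq n]
    (A : Matrix m n ℝ) : ℝ :=
  ‖LinearMap.toContinuousLinearMap (Matrix.toEuclideanLin A)‖

def SchurStable {n : ℕ} (F : Matrix (Fin n) (Fin n) ℝ) : Prop :=
  ∀ μ ∈ spectrum ℂ (F.map (algebraMap ℝ ℂ)), ‖μ‖ < 1

private lemma aux_assoc {a b c : Type*} [Fintype a] [Fintype b]
    (S P : Matrix a a ℝ) (h : S * S = P) (X : Matrix a b ℝ) (Y : Matrix a c ℝ) :
    Xᵀ * S * (S * Y) = Xᵀ * P * Y := by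
  rw [Matrix.mul_assoc, ← Matrix.mul_assoc S, h, ← Matrix.mul_assoc]

theorem stmt1 {m n : ℕ} (P1 : Matrix (Fin m) (Fin m) ℝ) (P2 : Matrix (Fin n) (Fin n) ℝ)
    (hP1 : P1.PosSemidef) (hP2 : P2.PosSemidef)
    (A : Matrix (Fin m) (Fin m) ℝ) (B : Matrix (Fin m) (Fin n) ℝ)
    (C : Matrix (Fin n) (Fin m) ℝ) (D : Matrix (Fin n) (Fin n) ℝ)
    (τ : ℝ) (hτ : 0 < τ) :
    (Matrix.fromBlocks ((1 + τ) • (Aᵀ * P1 * A + Cᵀ * P2 * C)) 0 0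
        ((1 + 1/τ) • (Bᵀ * P1 * B + Dᵀ * P2 * D))
      - (Matrix.fromBlocks A B C D)ᵀ * Matrix.fromBlocks P1 0 0 P2
          * Matrix.fromBlocks A B C D).PosSemidef := by
  open scoped MatrixOrder in set S1 := CFC.sqrt P1 with hS1def
  open scoped MatrixOrder in set S2 := CFC.sqrt P2 with hS2def
  have hS1t : S1ᵀ = S1 := by
    rw [← conjTranspose_eq_transpose_of_trivial]
    open scoped MatrixOrder in exact (CFC.sqrt_nonneg P1).posSemidef.1
  have hS2t : S2ᵀ = S2 := by
    rw [← conjTranspose_eq_transpose_of_trivial]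
    open scoped MatrixOrder in exact (CFC.sqrt_nonneg P2).posSemidef.1
  have hS1m : S1 * S1 = P1 := by
    open scoped MatrixOrder in exact CFC.sqrt_mul_sqrt_self P1 hP1.nonneg
  have hS2m : S2 * S2 = P2 := by
    open scoped MatrixOrder in exact CFC.sqrt_mul_sqrt_self P2 hP2.nonneg
  set s := Real.sqrt τ with hsdef
  have hs : 0 < s := Real.sqrt_pos.mpr hτ
  have hss : s * s = τ := Real.mul_self_sqrt hτ.le
  have hinv : s⁻¹ * s⁻¹ = 1 / τ := by rw [← mul_inv, hss, one_div]
  set K := Matrix.fromBlocks (s • (S1 * A)) (-(s⁻¹ • (S1 * B))) (s • (S2 * C)) (-(s⁻¹ • (S2 * D)))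
  have key : (Matrix.fromBlocks ((1 + τ) • (Aᵀ * P1 * A + Cᵀ * P2 * C)) 0 0
        ((1 + 1/τ) • (Bᵀ * P1 * B + Dᵀ * P2 * D))
      - (Matrix.fromBlocks A B C D)ᵀ * Matrix.fromBlocks P1 0 0 P2
          * Matrix.fromBlocks A B C D) = Kᵀ * K := by
    simp only [K, fromBlocks_transpose, fromBlocks_multiply, transpose_smul, transpose_neg,
      transpose_mul, hS1t, hS2t, Matrix.smul_mul, Matrix.mul_smul, Matrix.mul_neg,
      Matrix.neg_mul, smul_smul, smul_neg, neg_neg, hss, hinv,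
      mul_inv_cancel₀ hs.ne', inv_mul_cancel₀ hs.ne', one_smul,
      aux_assoc S1 P1 hS1m, aux_assoc S2 P2 hS2m,
      Matrix.mul_zero, Matrix.zero_mul, add_zero, zero_add]
    rw [sub_eq_add_neg, fromBlocks_neg]
    simp only [fromBlocks_add]
    rw [fromBlocks_inj]
    refine ⟨by module, by module, by module, by module⟩
  rw [key, ← conjTranspose_eq_transpose_of_trivial]
  exact posSemidef_conjTranspose_mul_self K
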